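/- arXiv:1501.04714 — 6 statements merged into one kernel-verified Lean document; each statement's English description precedes it below -/
import Mathlib

section
/- Let ψ : ℕ → ℝ be positive and non-increasing and θ irrational with convergent denominators q_k. If ∑_{k≥0} ∑_{n=q_k}^{q_{k+1}-1} min(ψ(n), ‖q_k θ‖) < ∞, then for almost all s ∈ ℝ (Lebesgue), the inequality ‖nθ − s‖ < ψ(n) holds for only finitely many n ∈ ℕ. -/
/-!
Pass to the circle `ℝ/ℤ`, where `‖x‖` is the norm, and group the indices into blocks
`q_k ≤ n < q_{k+1}`; let `B_k` be the `k`-th summand of the hypothesis. In a block, the `n`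
with `ψ n < ‖q_k θ‖` contribute balls of total measure `2 ∑ ψ n`. Since `ψ` is non-increasing,
the other `n` form an initial segment `[q_k, q_k + c)`; writing such an `n` as `n₀ + j q_k` with
`q_k ≤ n₀ < 2 q_k` and `j q_k < c`, its ball lies in the ball about `n₀ θ` of radius
`ψ(q_k) + (c / q_k) ‖q_k θ‖`, so these contribute at most `2 q_k ψ(q_k) + 2 c ‖q_k θ‖`.
Altogether block `k` covers measure at most `2 (B_k + q_k ψ(q_k))`.

To bound `q_k ψ(q_k)`, use `‖q_j θ‖ ≥ 1 / (q_j + q_{j+1})`, which comes from the determinant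
identity of the convergents. Since `B_k → 0`, it forces `ψ(q_{k+2}) ≤ ‖q_k θ‖, ‖q_{k+1} θ‖`
for large `k`, and then blocks `k` and `k + 1` give `q_{k+2} ψ(q_{k+2}) ≤ 2 (B_k + B_{k+1})`.
Hence the block measures are summable, and Borel–Cantelli on the circle concludes.
-/

open MeasureTheory Filter

/-- Distance from a real number to the nearest integer. -/
noncomputable def distNearestInt (x : ℝ) : ℝ := |x - round x|

open Metric Set Topology

lemma distNearestInt_eq_norm (x : ℝ) : distNearestInt x = ‖(x : UnitAddCircle)‖ :=
  UnitAddCircle.norm_eq.symm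

lemma distNearestInt_natCast_mul_sub (n : ℕ) (x s : ℝ) :
    distNearestInt (n * x - s) = dist (n • (x : UnitAddCircle)) s := by
  rw [dist_eq_norm, ← AddCircle.coe_nsmul, ← AddCircle.coe_sub, nsmul_eq_mul,
    distNearestInt_eq_norm]

lemma ae_coe_of_ae_unitAddCircle {p : UnitAddCircle → Prop} (h : ∀ᵐ x, p x) :
    ∀ᵐ s : ℝ, p s := by
  rw [← Measure.restrict_univ (μ := volume), ← iUnion_Ioc_intCast, ae_restrict_iUnion_iff]
  exact fun z => (UnitAddCircle.measurePreserving_mk z).quasiMeasurePreserving.ae h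

lemma ae_eventually_notMem_of_eventually_le {X : Type*} [MeasurableSpace X] {μ : Measure X}
    {s : ℕ → Set X} {f : ℕ → ℝ} (hf : Summable f)
    (h : ∀ᶠ k in atTop, μ (s k) ≤ ENNReal.ofReal (f k)) :
    ∀ᵐ x ∂μ, ∀ᶠ k in atTop, x ∉ s k := by
  obtain ⟨N, hN⟩ := eventually_atTop.1 h
  have hsum : ∑' k, μ (s (k + N)) ≠ ⊤ := by
    refine ne_top_of_le_ne_top ?_ (ENNReal.tsum_le_tsum fun k => hN (k + N) (by omega))
    exact ENNReal.tsum_coe_ne_top_iff_summable.2 ((summable_nat_add_iff N).2 hf).toNNReal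
  filter_upwards [ae_eventually_notMem hsum] with x hx
  rwa [← map_add_atTop_eq_nat N]

lemma finite_setOf_of_eventually_forall_Ico {q : ℕ → ℕ} (hmono : Monotone q)
    (htop : Tendsto q atTop atTop) {P : ℕ → Prop}
    (h : ∀ᶠ k in atTop, ∀ n ∈ Finset.Ico (q k) (q (k + 1)), ¬ P n) : {n | P n}.Finite := by
  obtain ⟨K, hK⟩ := eventually_atTop.1 h
  refine (Set.finite_lt_nat (q K)).subset fun n (hn : P n) =>
    show n < q K from lt_of_not_ge fun hKn => ?_
  have hex : ∃ k, n < q (k + 1) :=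
    (((tendsto_add_atTop_iff_nat 1).2 htop).eventually_gt_atTop n).exists
  obtain ⟨k, hnk, hmin⟩ : ∃ k, n < q (k + 1) ∧ ∀ j < k, ¬ n < q (j + 1) :=
    ⟨Nat.find hex, Nat.find_spec hex, fun j => Nat.find_min hex⟩
  have hKk : K ≤ k := by
    by_contra hkK
    exact hnk.not_ge (hKn.trans' (hmono (by omega)))
  have hkn : q k ≤ n := by
    cases k with
    | zero => exact (hmono (Nat.zero_le K)).trans hKn
    | succ j => exact not_lt.1 (hmin j j.lt_succ_self)
  exact hK k hKk n (Finset.mem_Ico.2 ⟨hkn, hnk⟩) hn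

lemma filter_Ico_subset_Ico_card {P : ℕ → Prop} [DecidablePred P]
    (hP : ∀ m n, m ≤ n → P n → P m) (Q Q' : ℕ) :
    (Finset.Ico Q Q').filter P ⊆ Finset.Ico Q (Q + ((Finset.Ico Q Q').filter P).card) := by
  intro n hn
  obtain ⟨⟨hQn, hnQ'⟩, hPn⟩ := by simpa only [Finset.mem_filter, Finset.mem_Ico] using hn
  have hsub : Finset.Ico Q (n + 1) ⊆ (Finset.Ico Q Q').filter P := fun m hm => by
    simp only [Finset.mem_filter, Finset.mem_Ico] at hm ⊢
    exact ⟨⟨hm.1, by omega⟩, hP m n (by omega) hPn⟩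
  have := Finset.card_le_card hsub
  simp only [Nat.card_Ico] at this
  exact Finset.mem_Ico.2 ⟨hQn, by omega⟩

section Covering
variable {E : Type*} [SeminormedAddCommGroup E]

lemma ball_add_nsmul_subset (x y : E) (j : ℕ) (r : ℝ) :
    ball (x + j • y) r ⊆ ball x (r + j * ‖y‖) :=
  ball_subset_ball' <| by
    rw [dist_eq_norm, add_sub_cancel_left]
    linarith [norm_nsmul_le (n := j) (a := y)]

lemma biUnion_Ico_ball_nsmul_subset (a : E) {Q : ℕ} (hQ : 0 < Q) (c : ℕ) (r : ℝ) :
    ⋃ n ∈ Finset.Ico Q (Q + c), ball (n • a) r ⊆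
      ⋃ n ∈ Finset.Ico Q (2 * Q), ball (n • a) (r + c / Q * ‖Q • a‖) := by
  intro x hx
  simp only [mem_iUnion, Finset.mem_Ico] at hx ⊢
  obtain ⟨n, ⟨hQn, hnc⟩, hx⟩ := hx
  have hdiv := Nat.div_add_mod (n - Q) Q
  have hmod := Nat.mod_lt (n - Q) hQ
  generalize (n - Q) / Q = j at hdiv
  generalize (n - Q) % Q = i at hdiv hmod
  have hn : n = (Q + i) + j * Q := by rw [mul_comm]; omega
  have hj : (j : ℝ) ≤ c / Q := by
    rw [le_div_iff₀ (by exact_mod_cast hQ)]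
    exact_mod_cast (by rw [mul_comm]; omega : j * Q ≤ c)
  refine ⟨Q + i, ⟨by omega, by omega⟩, ?_⟩
  rw [hn, add_nsmul, mul_nsmul'] at hx
  refine ball_subset_ball ?_ (ball_add_nsmul_subset _ _ _ _ hx)
  gcongr

lemma biUnion_Ico_ball_subset_union (a : E) {ψ : ℕ → ℝ} (hψ : Antitone ψ) {Q : ℕ} (hQ : 0 < Q)
    (Q' : ℕ) (d : ℝ) :
    ⋃ n ∈ Finset.Ico Q Q', ball (n • a) (ψ n) ⊆
      (⋃ n ∈ (Finset.Ico Q Q').filter (ψ · < d), ball (n • a) (ψ n)) ∪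
        ⋃ n ∈ Finset.Ico Q (2 * Q), ball (n • a)
          (ψ Q + ((Finset.Ico Q Q').filter (¬ ψ · < d)).card / Q * ‖Q • a‖) := by
  intro x hx
  simp only [mem_iUnion] at hx
  obtain ⟨n, hn, hx⟩ := hx
  by_cases h : ψ n < d
  · exact Or.inl (mem_biUnion (Finset.mem_filter.2 ⟨hn, h⟩) hx)
  · have hbig := filter_Ico_subset_Ico_card (P := (¬ ψ · < d))
      (fun m n hmn h hm => h ((hψ hmn).trans_lt hm)) Q Q' (Finset.mem_filter.2 ⟨hn, h⟩)
    exact Or.inr <| biUnion_Ico_ball_nsmul_subset a hQ _ (ψ Q) <|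
      mem_biUnion hbig (ball_subset_ball (hψ (Finset.mem_Ico.1 hn).1) hx)

end Covering

namespace AddCircle
variable {T : ℝ} [Fact (0 < T)]

lemma volume_ball_le (x : AddCircle T) (r : ℝ) :
    volume (ball x r) ≤ ENNReal.ofReal (2 * r) :=
  calc volume (ball x r) ≤ volume (closedBall x r) := measure_mono ball_subset_closedBall
    _ = ENNReal.ofReal (min T (2 * r)) := volume_closedBall T r
    _ ≤ ENNReal.ofReal (2 * r) := ENNReal.ofReal_le_ofReal (min_le_right _ _)

lemma volume_biUnion_ball_le {ι : Type*} (s : Finset ι) (x : ι → AddCircle T)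
    {r : ι → ℝ} (hr : ∀ i ∈ s, 0 ≤ r i) :
    volume (⋃ i ∈ s, ball (x i) (r i)) ≤ ENNReal.ofReal (2 * ∑ i ∈ s, r i) :=
  calc volume (⋃ i ∈ s, ball (x i) (r i)) ≤ ∑ i ∈ s, volume (ball (x i) (r i)) :=
        measure_biUnion_finset_le _ _
    _ ≤ ∑ i ∈ s, ENNReal.ofReal (2 * r i) := Finset.sum_le_sum fun i _ => volume_ball_le _ _
    _ = ENNReal.ofReal (2 * ∑ i ∈ s, r i) := by
        rw [← ENNReal.ofReal_sum_of_nonneg fun i hi => by linarith [hr i hi], Finset.mul_sum]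

lemma volume_biUnion_Ico_ball_le (α : AddCircle T) {ψ : ℕ → ℝ} (hψ₀ : ∀ n, 0 ≤ ψ n)
    (hψ : Antitone ψ) {Q : ℕ} (hQ : 0 < Q) (Q' : ℕ) :
    volume (⋃ n ∈ Finset.Ico Q Q', ball (n • α) (ψ n)) ≤
      ENNReal.ofReal (2 * (∑ n ∈ Finset.Ico Q Q', min (ψ n) ‖Q • α‖ + Q * ψ Q)) := by
  set d := ‖Q • α‖
  set small := (Finset.Ico Q Q').filter (fun n => ψ n < d)
  set big := (Finset.Ico Q Q').filter (fun n => ¬ ψ n < d)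
  set R := ψ Q + big.card / Q * d with hR
  have hsplit : ∑ n ∈ Finset.Ico Q Q', min (ψ n) d = ∑ n ∈ small, ψ n + big.card * d := by
    rw [← Finset.sum_filter_add_sum_filter_not _ (fun n => ψ n < d)]
    congr 1
    · exact Finset.sum_congr rfl fun n hn => min_eq_left (Finset.mem_filter.1 hn).2.le
    · rw [Finset.sum_congr rfl fun n hn => min_eq_right (not_lt.1 (Finset.mem_filter.1 hn).2),
        Finset.sum_const, nsmul_eq_mul]
  have hR₀ : 0 ≤ R := add_nonneg (hψ₀ Q) (by positivity)
  have hsmall : 0 ≤ ∑ n ∈ small, ψ n := Finset.sum_nonneg fun n _ => hψ₀ n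
  have hQR : (Q : ℝ) * R = Q * ψ Q + big.card * d := by
    rw [hR]
    field_simp
  calc volume (⋃ n ∈ Finset.Ico Q Q', ball (n • α) (ψ n))
      ≤ volume (⋃ n ∈ small, ball (n • α) (ψ n)) +
          volume (⋃ n ∈ Finset.Ico Q (2 * Q), ball (n • α) R) :=
        (measure_mono (biUnion_Ico_ball_subset_union α hψ hQ Q' d)).trans (measure_union_le _ _)
    _ ≤ ENNReal.ofReal (2 * ∑ n ∈ small, ψ n) +
          ENNReal.ofReal (2 * ∑ _n ∈ Finset.Ico Q (2 * Q), R) :=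
        add_le_add (volume_biUnion_ball_le _ _ fun n _ => hψ₀ n)
          (volume_biUnion_ball_le _ _ fun _ _ => hR₀)
    _ = ENNReal.ofReal (2 * (∑ n ∈ Finset.Ico Q Q', min (ψ n) d + Q * ψ Q)) := by
        rw [← ENNReal.ofReal_add (by positivity) (by positivity), Finset.sum_const, Nat.card_Ico,
          nsmul_eq_mul, show 2 * Q - Q = Q by omega, hsplit, hQR]
        ring_nf

end AddCircle

section ContinuedFraction
open GenContFract
variable {θ : ℝ} {q : ℕ → ℕ}

lemma not_terminatedAt_of_irrational (hθ : Irrational θ) (n : ℕ) :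
    ¬ (GenContFract.of θ).TerminatedAt n := fun h => by
  obtain ⟨r, hr⟩ := (terminates_iff_rat θ).1 ⟨n, h⟩
  exact hθ ⟨r, hr.symm⟩

lemma exists_int_nums_eq (hθ : Irrational θ) (k : ℕ) :
    ∃ z : ℤ, (GenContFract.of θ).nums k = z := by
  induction k using Nat.twoStepInduction with
  | zero => exact ⟨⌊θ⌋, by rw [zeroth_num_eq_h, of_h_eq_floor]⟩
  | one =>
    obtain ⟨gp, hgp⟩ := Option.ne_none_iff_exists'.1 (not_terminatedAt_of_irrational hθ 0)
    obtain ⟨ha, b, hb⟩ := of_partNum_eq_one_and_exists_int_partDen_eq hgp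
    exact ⟨b * ⌊θ⌋ + 1, by rw [first_num_eq hgp, of_h_eq_floor, ha, hb]; push_cast; ring⟩
  | more n ih₀ ih₁ =>
    obtain ⟨gp, hgp⟩ := Option.ne_none_iff_exists'.1 (not_terminatedAt_of_irrational hθ (n + 1))
    obtain ⟨ha, b, hb⟩ := of_partNum_eq_one_and_exists_int_partDen_eq hgp
    obtain ⟨z₀, hz₀⟩ := ih₀
    obtain ⟨z₁, hz₁⟩ := ih₁
    exact ⟨b * z₁ + z₀, by rw [nums_recurrence hgp hz₀ hz₁, ha, hb]; push_cast; ring⟩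

lemma den_monotone (hq : ∀ k, (q k : ℝ) = (GenContFract.of θ).dens k) : Monotone q :=
  monotone_nat_of_le_succ fun k => by
    have : (q k : ℝ) ≤ q (k + 1) := by rw [hq, hq]; exact of_den_mono
    exact_mod_cast this

lemma fib_succ_le_den (hθ : Irrational θ) (hq : ∀ k, (q k : ℝ) = (GenContFract.of θ).dens k)
    (k : ℕ) : Nat.fib (k + 1) ≤ q k := by
  have := succ_nth_fib_le_of_nth_den (Or.inr (not_terminatedAt_of_irrational hθ (k - 1)))
  exact_mod_cast (hq k).symm ▸ this

lemma den_pos (hθ : Irrational θ) (hq : ∀ k, (q k : ℝ) = (GenContFract.of θ).dens k)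
    (k : ℕ) : 0 < q k :=
  (Nat.fib_pos.2 k.succ_pos).trans_le (fib_succ_le_den hθ hq k)

lemma two_le_den (hθ : Irrational θ) (hq : ∀ k, (q k : ℝ) = (GenContFract.of θ).dens k)
    {k : ℕ} (hk : 2 ≤ k) : 2 ≤ q k :=
  calc 2 = Nat.fib 3 := rfl
    _ ≤ Nat.fib (k + 1) := Nat.fib_mono (by omega)
    _ ≤ q k := fib_succ_le_den hθ hq k

lemma tendsto_den_atTop (hθ : Irrational θ)
    (hq : ∀ k, (q k : ℝ) = (GenContFract.of θ).dens k) : Tendsto q atTop atTop :=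
  tendsto_atTop_mono (fun k => show k ≤ q k by
    linarith [Nat.le_fib_add_one (k + 1), fib_succ_le_den hθ hq k]) tendsto_id

lemma den_add_den_le (hθ : Irrational θ) (hq : ∀ k, (q k : ℝ) = (GenContFract.of θ).dens k)
    (k : ℕ) : q k + q (k + 1) ≤ q (k + 2) := by
  obtain ⟨gp, hgp⟩ := Option.ne_none_iff_exists'.1 (not_terminatedAt_of_irrational hθ (k + 1))
  have hrec := dens_recurrence hgp rfl rfl
  rw [of_partNum_eq_one (partNum_eq_s_a hgp)] at hrec
  have hb : 1 ≤ gp.b := of_one_le_get?_partDen (partDen_eq_s_b hgp)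
  have : (q k + q (k + 1) : ℝ) ≤ q (k + 2) := by
    rw [hq, hq, hq, hrec]
    nlinarith [zero_le_of_den (v := θ) (n := k + 1)]
  exact_mod_cast this

lemma abs_den_mul_sub_num_le (hθ : Irrational θ)
    (hq : ∀ k, (q k : ℝ) = (GenContFract.of θ).dens k) (k : ℕ) :
    |q k * θ - (GenContFract.of θ).nums k| ≤ 1 / q (k + 1) := by
  have h := abs_sub_convs_le (not_terminatedAt_of_irrational hθ k)
  have hk : (0 : ℝ) < q k := by exact_mod_cast den_pos hθ hq k
  rw [conv_eq_num_div_den, ← hq, ← hq] at h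
  calc |q k * θ - (GenContFract.of θ).nums k|
      = q k * |θ - (GenContFract.of θ).nums k / q k| := by
        rw [← abs_of_pos hk, ← abs_mul, abs_of_pos hk, mul_sub, mul_div_cancel₀ _ hk.ne']
    _ ≤ q k * (1 / (q k * q (k + 1))) := by gcongr
    _ = 1 / q (k + 1) := by field_simp

lemma one_le_abs_den_mul_num_sub (hθ : Irrational θ)
    (hq : ∀ k, (q k : ℝ) = (GenContFract.of θ).dens k) {k : ℕ} (h2 : 2 ≤ q (k + 1)) (z : ℤ) :
    1 ≤ |q k * (GenContFract.of θ).nums (k + 1) - q (k + 1) * z| := by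
  obtain ⟨p, hp⟩ := exists_int_nums_eq hθ k
  obtain ⟨p', hp'⟩ := exists_int_nums_eq hθ (k + 1)
  have hdet : p * q (k + 1) - q k * p' = (-1 : ℤ) ^ (k + 1) := by
    have := SimpContFract.determinant (s := ⟨GenContFract.of θ, of_isSimpContFract θ⟩)
      (not_terminatedAt_of_irrational hθ k)
    rw [← hq, ← hq, hp, hp'] at this
    exact_mod_cast this
  -- otherwise `q (k + 1) ≥ 2` would divide `(-1) ^ (k + 1)`
  have hN : (q k * p' - q (k + 1) * z : ℤ) ≠ 0 := by
    intro h0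
    have hunit : IsUnit ((q (k + 1) : ℤ) * (p - z)) := by
      rw [show (q (k + 1) : ℤ) * (p - z) = (-1) ^ (k + 1) by linear_combination hdet + h0]
      exact isUnit_neg_one.pow _
    rcases Int.isUnit_iff.1 (isUnit_of_mul_isUnit_left hunit) with h | h <;> omega
  rw [hp']
  exact_mod_cast Int.one_le_abs hN

lemma one_le_den_add_den_mul_norm (hθ : Irrational θ)
    (hq : ∀ k, (q k : ℝ) = (GenContFract.of θ).dens k) {k : ℕ} (h2 : 2 ≤ q (k + 1)) :
    1 ≤ (q k + q (k + 1) : ℝ) * ‖q k • (θ : UnitAddCircle)‖ := by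
  set p' := (GenContFract.of θ).nums (k + 1)
  set z := round ((q k : ℝ) * θ)
  have hnorm : ‖q k • (θ : UnitAddCircle)‖ = |q k * θ - z| := by
    rw [← AddCircle.coe_nsmul, nsmul_eq_mul, UnitAddCircle.norm_eq]
  have hk : (0 : ℝ) < q k := by exact_mod_cast den_pos hθ hq k
  have hk₁ : (0 : ℝ) < q (k + 1) := by exact_mod_cast den_pos hθ hq (k + 1)
  have hk₂ : (q k + q (k + 1) : ℝ) ≤ q (k + 2) := by exact_mod_cast den_add_den_le hθ hq k
  have hkey : 1 ≤ q (k + 1) * |q k * θ - z| + q k * (1 / (q k + q (k + 1))) :=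
    calc (1 : ℝ) ≤ |q k * p' - q (k + 1) * z| := one_le_abs_den_mul_num_sub hθ hq h2 z
      _ = |q (k + 1) * (q k * θ - z) - q k * (q (k + 1) * θ - p')| := by congr 1; ring
      _ ≤ q (k + 1) * |q k * θ - z| + q k * |q (k + 1) * θ - p'| := by
        refine (abs_sub _ _).trans ?_
        rw [abs_mul, abs_mul, abs_of_pos hk, abs_of_pos hk₁]
      _ ≤ q (k + 1) * |q k * θ - z| + q k * (1 / (q k + q (k + 1))) := by
        gcongr
        exact (abs_den_mul_sub_num_le hθ hq (k + 1)).trans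
          (one_div_le_one_div_of_le (by positivity) hk₂)
  rw [hnorm]
  field_simp at hkey
  nlinarith [abs_nonneg ((q k : ℝ) * θ - z)]

lemma one_le_two_mul_den_mul_norm (hθ : Irrational θ)
    (hq : ∀ k, (q k : ℝ) = (GenContFract.of θ).dens k) {k : ℕ} (hk : 1 ≤ k) :
    1 ≤ 2 * q (k + 1) * ‖q k • (θ : UnitAddCircle)‖ := by
  have h := one_le_den_add_den_mul_norm hθ hq (two_le_den hθ hq (by omega : 2 ≤ k + 1))
  have hmono : (q k : ℝ) ≤ q (k + 1) := by exact_mod_cast den_monotone hq k.le_succ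
  nlinarith [norm_nonneg (q k • (θ : UnitAddCircle))]

end ContinuedFraction

noncomputable def blockSum {T : ℝ} (q : ℕ → ℕ) (ψ : ℕ → ℝ) (α : AddCircle T) (k : ℕ) : ℝ :=
  ∑ n ∈ Finset.Ico (q k) (q (k + 1)), min (ψ n) ‖q k • α‖

lemma den_mul_le_blockSum_add {T : ℝ} {q : ℕ → ℕ} {ψ : ℕ → ℝ} (α : AddCircle T)
    (hψ : Antitone ψ) (hq : Monotone q) {m : ℕ} (hadd : q m + q (m + 1) ≤ q (m + 2)) {x : ℝ}
    (hx₀ : 0 ≤ x) (hxψ : x ≤ ψ (q (m + 2))) (hx₁ : x ≤ ‖q m • α‖)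
    (hx₂ : x ≤ ‖q (m + 1) • α‖) :
    q (m + 2) * x ≤ 2 * (blockSum q ψ α m + blockSum q ψ α (m + 1)) := by
  have hblock : ∀ j ≤ m + 1, x ≤ ‖q j • α‖ →
      ((q (j + 1) - q j : ℕ) : ℝ) * x ≤ blockSum q ψ α j := fun j hj hxj => by
    have := Finset.card_nsmul_le_sum (Finset.Ico (q j) (q (j + 1))) _ x fun n hn =>
      le_min (hxψ.trans (hψ ((Finset.mem_Ico.1 hn).2.le.trans (hq (by omega))))) hxj
    rwa [Nat.card_Ico, nsmul_eq_mul] at this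
  have h₁ := hblock m (by omega) hx₁
  have h₂ := hblock (m + 1) le_rfl hx₂
  rw [Nat.cast_sub (hq (by omega))] at h₁ h₂
  have hadd' : (q m + q (m + 1) : ℝ) ≤ q (m + 2) := by exact_mod_cast hadd
  have hmono : (q m : ℝ) ≤ q (m + 1) := by exact_mod_cast hq (by omega : m ≤ m + 1)
  nlinarith

lemma eventually_den_mul_le_blockSum_add {θ : ℝ} (hθ : Irrational θ) {q : ℕ → ℕ}
    (hq : ∀ k, (q k : ℝ) = (GenContFract.of θ).dens k) {ψ : ℕ → ℝ} (hψ₀ : ∀ n, 0 ≤ ψ n)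
    (hψ : Antitone ψ) (hB : Tendsto (blockSum q ψ (θ : UnitAddCircle)) atTop (𝓝 0)) :
    ∀ᶠ m in atTop, q (m + 2) * ψ (q (m + 2)) ≤
      2 * (blockSum q ψ (θ : UnitAddCircle) m + blockSum q ψ (θ : UnitAddCircle) (m + 1)) := by
  set α : UnitAddCircle := (θ : UnitAddCircle)
  have hsmall : ∀ᶠ m in atTop, blockSum q ψ α m + blockSum q ψ α (m + 1) < 1 / 4 :=
    (hB.add (hB.comp (tendsto_add_atTop_nat 1))).eventually (gt_mem_nhds (by norm_num))
  filter_upwards [hsmall, eventually_ge_atTop 1] with m hm hm₁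
  have hmono := den_monotone hq
  have hadd := den_add_den_le hθ hq m
  by_cases h : ψ (q (m + 2)) ≤ min ‖q m • α‖ ‖q (m + 1) • α‖
  · exact den_mul_le_blockSum_add α hψ hmono hadd (hψ₀ _) le_rfl
      (h.trans (min_le_left _ _)) (h.trans (min_le_right _ _))
  · exfalso
    have hx := den_mul_le_blockSum_add α hψ hmono hadd (le_min (norm_nonneg _) (norm_nonneg _))
      (not_le.1 h).le (min_le_left _ _) (min_le_right _ _)
    have h₁ := one_le_two_mul_den_mul_norm hθ hq hm₁
    have h₂ := one_le_two_mul_den_mul_norm hθ hq (by omega : 1 ≤ m + 1)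
    have h12 : (q (m + 1) : ℝ) ≤ q (m + 2) := by exact_mod_cast hmono (m + 1).le_succ
    have : 1 ≤ 2 * q (m + 2) * min ‖q m • α‖ ‖q (m + 1) • α‖ := by
      rw [mul_min_of_nonneg _ _ (by positivity)]
      exact le_min (by nlinarith [norm_nonneg (q m • α)]) h₂
    linarith

theorem convergence_part
    (θ : ℝ) (hθ : Irrational θ) (q : ℕ → ℕ)
    (hq : ∀ k, (q k : ℝ) = (GenContFract.of θ).dens k)
    (ψ : ℕ → ℝ) (hψpos : ∀ n, 0 < ψ n) (hψmono : ∀ m n, m ≤ n → ψ n ≤ ψ m)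
    (hconv : Summable fun k =>
      ∑ n ∈ Finset.Ico (q k) (q (k + 1)), min (ψ n) (distNearestInt ((q k : ℝ) * θ))) :
    ∀ᵐ s ∂(volume : Measure ℝ),
      {n : ℕ | distNearestInt ((n : ℝ) * θ - s) < ψ n}.Finite := by
  set α : UnitAddCircle := (θ : UnitAddCircle)
  set B := blockSum q ψ α
  have hψ₀ : ∀ n, 0 ≤ ψ n := fun n => (hψpos n).le
  have hB : Summable B := hconv.congr fun k => by
    simp only [B, α, blockSum, distNearestInt_eq_norm, ← nsmul_eq_mul, AddCircle.coe_nsmul]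
  have hvol : ∀ᶠ m in atTop,
      volume (⋃ n ∈ Finset.Ico (q (m + 2)) (q (m + 2 + 1)), ball (n • α) (ψ n)) ≤
        ENNReal.ofReal (2 * B (m + 2) + 4 * (B m + B (m + 1))) := by
    filter_upwards [eventually_den_mul_le_blockSum_add hθ hq hψ₀ hψmono hB.tendsto_atTop_zero]
      with m hm
    refine (AddCircle.volume_biUnion_Ico_ball_le α hψ₀ hψmono (den_pos hθ hq _) _).trans
      (ENNReal.ofReal_le_ofReal ?_)
    rw [← blockSum]
    linarith
  have hsum : Summable fun m => 2 * B (m + 2) + 4 * (B m + B (m + 1)) :=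
    (((summable_nat_add_iff 2).2 hB).mul_left 2).add
      ((hB.add ((summable_nat_add_iff 1).2 hB)).mul_left 4)
  filter_upwards [ae_coe_of_ae_unitAddCircle (ae_eventually_notMem_of_eventually_le hsum hvol)]
    with s hs
  refine finite_setOf_of_eventually_forall_Ico (den_monotone hq) (tendsto_den_atTop hθ hq) ?_
  rw [← map_add_atTop_eq_nat 2, eventually_map]
  filter_upwards [hs] with m hm n hn hlt
  exact hm (mem_biUnion hn (by rwa [mem_ball', ← distNearestInt_natCast_mul_sub]))
end

section
/- Let θ be irrational and T : ℝ/ℤ → ℝ/ℤ the rotation x ↦ x + θ. For an interval I ⊆ ℝ/ℤ, any x ∈ ℝ/ℤ, and any convergent denominator q_k of θ, the number of n with 0 ≤ n < q_k and T^n x ∈ I is at most q_k·μ(I) + 2, where μ is Haar measure. -/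
open MeasureTheory Filter
open scoped ENNReal Classical

/-!
Let `P/Q` be the `k`-th convergent of `θ`, so that `P` is coprime to `Q` and
`δ = θ - P/Q` satisfies `|δ| ≤ 1/Q²`. Write `x - c = β`. If `‖β + nθ‖ < r` with `n < Q`, the
integer `g n = Q·round(β + nθ) - nP` lies within `Qr` of `Qβ + nQδ`, and the drift `nQδ` stays in
a window of length `Q(Q-1)|δ| ≤ 1`; so all `g n` lie in a half-open interval of length
`ℓ ≤ 2Qr + 1`. Since `g n ≡ -nP (mod Q)` and `P` is a unit mod `Q`, the `g n` are distinct,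
and an interval of length `ℓ` contains at most `⌈ℓ⌉ < 2Qr + 2` integers.
-/

namespace GenContFract

variable {K : Type*} [Field K] [LinearOrder K] [FloorRing K]

theorem not_terminatedAt_of_irrational {θ : ℝ} (hθ : Irrational θ) (n : ℕ) :
    ¬(GenContFract.of θ).TerminatedAt n := fun h ↦
  let ⟨q, hq⟩ := (terminates_iff_rat θ).mp ⟨n, h⟩
  hθ ⟨q, hq.symm⟩

theorem exists_int_pair_eq_contsAux (v : K) (n : ℕ) :
    ∃ p : Pair ℤ, (GenContFract.of v).contsAux n = p.map (↑) := by
  suffices ∀ n, (∃ p : Pair ℤ, (GenContFract.of v).contsAux n = p.map (↑)) ∧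
      ∃ p : Pair ℤ, (GenContFract.of v).contsAux (n + 1) = p.map (↑) from (this n).1
  intro n
  induction n with
  | zero => exact ⟨⟨⟨1, 0⟩, by simp [Pair.map]⟩, ⟨⟨⌊v⌋, 1⟩, by simp [Pair.map, of_h_eq_floor]⟩⟩
  | succ n ih =>
    refine ⟨ih.2, ?_⟩
    obtain ⟨⟨⟨A₀, B₀⟩, h₀⟩, ⟨⟨A₁, B₁⟩, h₁⟩⟩ := ih
    rcases hs : (GenContFract.of v).s.get? n with _ | gp
    · exact ⟨_, (contsAux_stable_of_terminated (by omega) hs).trans h₁⟩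
    · obtain ⟨ha, z, hz⟩ := of_partNum_eq_one_and_exists_int_partDen_eq hs
      refine ⟨⟨z * A₁ + A₀, z * B₁ + B₀⟩, ?_⟩
      rw [contsAux_recurrence hs h₀ h₁]
      simp [Pair.map, ha, hz]

theorem exists_int_eq_num_and_den (v : K) (n : ℕ) :
    ∃ A B : ℤ, (GenContFract.of v).nums n = A ∧ (GenContFract.of v).dens n = B := by
  obtain ⟨⟨A, B⟩, h⟩ := exists_int_pair_eq_contsAux v (n + 1)
  rw [num_eq_conts_a, den_eq_conts_b, nth_cont_eq_succ_nth_contAux, h]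
  exact ⟨A, B, rfl, rfl⟩

variable {v : K} {n : ℕ}

theorem isCoprime_of_num_of_den (hn : ¬(GenContFract.of v).TerminatedAt n) {A B : ℤ}
    (hA : (GenContFract.of v).nums n = A) (hB : (GenContFract.of v).dens n = B) :
    IsCoprime A B := by
  obtain ⟨A', B', hA', hB'⟩ := exists_int_eq_num_and_den v (n + 1)
  have hdet : A * B' - B * A' = (-1) ^ (n + 1) := by
    have := SimpContFract.determinant (s := ⟨_, of_isSimpContFract v⟩) hn
    rw [hA, hB, hA', hB'] at this
    exact_mod_cast this
  have hsq : ((-1 : ℤ) ^ (n + 1)) ^ 2 = 1 := by rw [← pow_mul, pow_mul', neg_one_sq, one_pow]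
  exact ⟨(-1) ^ (n + 1) * B', -((-1) ^ (n + 1) * A'),
    by linear_combination (-1 : ℤ) ^ (n + 1) * hdet + hsq⟩

variable [IsStrictOrderedRing K]

theorem one_le_den (hn : ¬(GenContFract.of v).TerminatedAt n) :
    1 ≤ (GenContFract.of v).dens n :=
  le_trans (by exact_mod_cast Nat.fib_pos.mpr n.succ_pos)
    (succ_nth_fib_le_of_nth_den (Or.inr (mt (terminated_stable (n.sub_le 1)) hn)))

theorem abs_sub_convs_le_one_div_den_sq (hn : ¬(GenContFract.of v).TerminatedAt n) :
    |v - (GenContFract.of v).convs n| ≤ 1 / (GenContFract.of v).dens n ^ 2 := by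
  refine (abs_sub_convs_le hn).trans (one_div_le_one_div_of_le ?_ ?_)
  · exact pow_pos (zero_lt_one.trans_le (one_le_den hn)) 2
  · rw [sq]; exact mul_le_mul_of_nonneg_left of_den_mono zero_le_of_den

theorem exists_isCoprime_abs_sub_div_den_le (hn : ¬(GenContFract.of v).TerminatedAt n) {Q : ℕ}
    (hQ : (Q : K) = (GenContFract.of v).dens n) :
    0 < Q ∧ ∃ P : ℤ, IsCoprime P Q ∧ |v - P / Q| ≤ 1 / (Q : K) ^ 2 := by
  obtain ⟨A, B, hA, hB⟩ := exists_int_eq_num_and_den v n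
  have hBQ : B = Q := by exact_mod_cast hB.symm.trans hQ.symm
  refine ⟨by exact_mod_cast (one_le_den hn).trans_eq hQ.symm, A,
    hBQ ▸ isCoprime_of_num_of_den hn hA hB, ?_⟩
  rw [hQ, ← hA, ← conv_eq_num_div_den]
  exact abs_sub_convs_le_one_div_den_sq hn

end GenContFract

theorem Int.card_le_ceil_of_forall_mem_Ico {R : Type*} [Ring R] [LinearOrder R]
    [IsStrictOrderedRing R] [FloorRing R] {s : Finset ℤ} {a ℓ : R}
    (hs : ∀ m ∈ s, a ≤ m ∧ (m : R) < a + ℓ) : s.card ≤ ⌈ℓ⌉₊ := by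
  have hsub : s ⊆ Finset.Ico ⌈a⌉ ⌈a + ℓ⌉ := fun m hm ↦
    Finset.mem_Ico.2 ⟨Int.ceil_le.2 (hs m hm).1, Int.lt_ceil.2 (hs m hm).2⟩
  calc s.card ≤ (Finset.Ico ⌈a⌉ ⌈a + ℓ⌉).card := Finset.card_le_card hsub
    _ = (⌈a + ℓ⌉ - ⌈a⌉).toNat := Int.card_Ico _ _
    _ ≤ ⌈ℓ⌉.toNat := by have := Int.ceil_add_le a ℓ; omega
    _ = ⌈ℓ⌉₊ := Int.ceil_toNat ℓ

theorem Nat.eq_of_lt_of_dvd_sub_mul {Q n m : ℕ} {P : ℤ} (hPQ : IsCoprime P Q) (hn : n < Q)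
    (hm : m < Q) (h : (Q : ℤ) ∣ (n - m) * P) : n = m := by
  have := Int.eq_zero_of_abs_lt_dvd (hPQ.symm.dvd_of_dvd_mul_right h) (by rw [abs_lt]; omega)
  omega

theorem mul_mem_Icc_of_mem_Icc {K : Type*} [Field K] [LinearOrder K] [IsStrictOrderedRing K]
    {n t : K} (hn : n ∈ Set.Icc 0 t) (δ : K) :
    n * δ ∈ Set.Icc (min 0 (t * δ)) (min 0 (t * δ) + t * |δ|) := by
  obtain ⟨hn, hnt⟩ := hn
  rcases le_total 0 δ with hδ | hδ
  · rw [abs_of_nonneg hδ, min_eq_left (mul_nonneg (hn.trans hnt) hδ)]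
    exact ⟨mul_nonneg hn hδ, by nlinarith⟩
  · rw [abs_of_nonpos hδ, min_eq_right (mul_nonpos_of_nonneg_of_nonpos (hn.trans hnt) hδ)]
    constructor <;> nlinarith

theorem card_filter_norm_add_mul_lt_le {Q : ℕ} (hQ : 0 < Q) {P : ℤ} (hPQ : IsCoprime P Q)
    {θ : ℝ} (hθ : |θ - P / Q| ≤ 1 / Q ^ 2) (β : ℝ) {r : ℝ} (hr : 0 ≤ r) :
    (((Finset.range Q).filter fun n : ℕ ↦ ‖((β + n * θ : ℝ) : UnitAddCircle)‖ < r).card : ℝ)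
      ≤ Q * (2 * r) + 2 := by
  set S := (Finset.range Q).filter fun n : ℕ ↦ ‖((β + n * θ : ℝ) : UnitAddCircle)‖ < r
  set δ := θ - P / Q
  have hQ1 : (1 : ℝ) ≤ Q := Nat.one_le_cast.2 hQ
  let g : ℕ → ℤ := fun n ↦ round (β + n * θ) * Q - n * P
  set a := Q * (β - r + min 0 ((Q - 1) * δ))
  set ℓ := Q * (2 * r + (Q - 1) * |δ|)
  have hg : ∀ n ∈ S, a ≤ g n ∧ (g n : ℝ) < a + ℓ := by
    intro n hn
    obtain ⟨hnQ, hnr⟩ := Finset.mem_filter.1 hn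
    rw [UnitAddCircle.norm_eq, abs_lt] at hnr
    have hnQ' : (n : ℝ) ≤ Q - 1 := by
      rw [le_sub_iff_add_le]; exact_mod_cast Finset.mem_range.1 hnQ
    have hnδ := mul_mem_Icc_of_mem_Icc ⟨n.cast_nonneg, hnQ'⟩ δ
    have hgn : (g n : ℝ) = Q * (β + n * δ) - Q * (β + n * θ - round (β + n * θ)) := by
      simp only [g, δ]; push_cast; field_simp; ring
    constructor <;> rw [hgn] <;> nlinarith [hnδ.1, hnδ.2]
  have hinj : Set.InjOn g S := fun n hn m hm hnm ↦
    Nat.eq_of_lt_of_dvd_sub_mul hPQ (Finset.mem_range.1 (Finset.mem_filter.1 hn).1)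
      (Finset.mem_range.1 (Finset.mem_filter.1 hm).1)
      ⟨round (β + n * θ) - round (β + m * θ), by simp only [g] at hnm; linear_combination -hnm⟩
  have hℓ : ℓ ≤ Q * (2 * r) + 1 := by
    have : Q * ((Q - 1) * |δ|) ≤ 1 := calc
      _ ≤ (Q : ℝ) * ((Q - 1) * (1 / (Q : ℝ) ^ 2)) := by gcongr
      _ ≤ 1 := by field_simp; linarith
    linarith
  calc (S.card : ℝ) = (S.image g).card := by rw [Finset.card_image_of_injOn hinj]
    _ ≤ ⌈ℓ⌉₊ := by
      exact_mod_cast Int.card_le_ceil_of_forall_mem_Ico (a := a) (by simpa using hg)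
    _ ≤ ℓ + 1 := (Nat.ceil_lt_add_one (mul_nonneg (by linarith) (by nlinarith [abs_nonneg δ]))).le
    _ ≤ Q * (2 * r) + 2 := by linarith

theorem AddCircle.toReal_volume_ball {T : ℝ} [hT : Fact (0 < T)] (c : AddCircle T) {r : ℝ}
    (hr : 0 ≤ r) : (volume (Metric.ball c r)).toReal = min T (2 * r) := by
  rw [← measure_congr AddCircle.closedBall_ae_eq_ball, AddCircle.volume_closedBall,
    ENNReal.toReal_ofReal (le_min hT.out.le (by positivity))]

theorem card_filter_add_mem_ball_le {Q : ℕ} (hQ : 0 < Q) {P : ℤ} (hPQ : IsCoprime P Q)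
    {θ : ℝ} (hθ : |θ - P / Q| ≤ 1 / Q ^ 2) (x c : AddCircle (1 : ℝ)) (r : ℝ) :
    ((Finset.range Q).filter
        (fun n : ℕ => x + (((n : ℝ) * θ : ℝ) : AddCircle (1 : ℝ)) ∈ Metric.ball c r)).card
      ≤ (Q : ℝ) * (volume (Metric.ball c r)).toReal + 2 := by
  rcases le_or_gt r 0 with hr | hr
  · simp [Metric.ball_eq_empty.2 hr]
  rw [AddCircle.toReal_volume_ball c hr.le]
  rcases le_total 1 (2 * r) with h2r | h2r
  · calc _ ≤ ((Finset.range Q).card : ℝ) := by exact_mod_cast Finset.card_filter_le _ _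
      _ ≤ Q * min 1 (2 * r) + 2 := by simp [min_eq_left h2r]
  obtain ⟨β, hβ⟩ := QuotientAddGroup.mk_surjective (x - c)
  rw [min_eq_right h2r]
  convert card_filter_norm_add_mul_lt_le hQ hPQ hθ β hr.le using 4 with n
  rw [Metric.mem_ball, dist_eq_norm, AddCircle.coe_add, hβ, add_sub_right_comm]

theorem denjoy_koksma_orbit_count
    (θ : ℝ) (hθ : Irrational θ) (q : ℕ → ℕ)
    (hq : ∀ k, (q k : ℝ) = (GenContFract.of θ).dens k)
    (x c : AddCircle (1 : ℝ)) (r : ℝ) (k : ℕ) :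
    ((Finset.range (q k)).filter
        (fun n : ℕ => x + ((((n : ℕ) : ℝ) * θ : ℝ) : AddCircle (1 : ℝ)) ∈ Metric.ball c r)).card
      ≤ (q k : ℝ) * (volume (Metric.ball c r)).toReal + 2 := by
  obtain ⟨hQ, P, hPQ, hθP⟩ := GenContFract.exists_isCoprime_abs_sub_div_den_le
    (GenContFract.not_terminatedAt_of_irrational hθ k) (hq k)
  exact card_filter_add_mem_ball_le hQ hPQ hθP x c r
end

section
/- Let A_1, A_2, … be measurable subsets of a probability space such that there is a constant D with μ(A_k ∩ A_ℓ) ≤ μ(A_k)μ(A_ℓ) + D·2^{-(k-ℓ)/2}·μ(A_k) for all ℓ < k. If ∑_k μ(A_k) = ∞, then μ(limsup A_k) = 1. -/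
open MeasureTheory Filter
open scoped ENNReal Classical

/-!
Kochen–Stone argument. For a finite block `s` of indices, Cauchy–Schwarz applied to
`∑ k ∈ s, 𝟙_{A k}` and the indicator of `⋃ k ∈ s, A k` gives the Chung–Erdős inequality
`(∑ μ A_k)² ≤ μ(⋃ A_k) · ∑∑ μ(A_k ∩ A_l)`. The quasi-independence hypothesis, whose error terms
`D 2^{-(k-l)/2} μ A_k` sum geometrically in `l`, bounds the double sum by `S² + C S` with
`S = ∑ μ A_k`, so `(1 - μ(⋃_{k ≥ K} A_k)) S ≤ C`. As `S` can be made arbitrarily large on the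
tail `k ≥ K`, every tail union has full measure, and so does their intersection.
-/

theorem Finset.sum_sum_eq_sum_add_two_nsmul_sum_filter_lt {ι M : Type*} [LinearOrder ι]
    [AddCommMonoid M] (s : Finset ι) (g : ι → ι → M) (hg : ∀ k l, g k l = g l k) :
    ∑ k ∈ s, ∑ l ∈ s, g k l = ∑ k ∈ s, g k k + 2 • ∑ k ∈ s, ∑ l ∈ s with l < k, g k l := by
  have trichotomy : ∀ k l, g k l =
      (if l < k then g k l else 0) + (if k = l then g k l else 0) + (if k < l then g k l else 0) := by
    intro k l
    rcases lt_trichotomy k l with h | rfl | h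
    · simp [h, h.ne, not_lt_of_gt h]
    · simp
    · simp [h, h.ne', not_lt_of_gt h]
  have upper : ∑ k ∈ s, ∑ l ∈ s with k < l, g k l = ∑ k ∈ s, ∑ l ∈ s with l < k, g k l := by
    rw [Finset.sum_comm' (t' := s) (s' := fun l => s.filter (· < l))]
    · simp_rw [hg]
    · intro k l
      simp only [Finset.mem_filter]
      tauto
  calc ∑ k ∈ s, ∑ l ∈ s, g k l
      = ∑ k ∈ s, (∑ l ∈ s with l < k, g k l + g k k + ∑ l ∈ s with k < l, g k l) := by
        refine Finset.sum_congr rfl fun k hk => ?_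
        rw [Finset.sum_congr rfl fun l _ => trichotomy k l, Finset.sum_add_distrib,
          Finset.sum_add_distrib, Finset.sum_ite_eq s k, if_pos hk, ← Finset.sum_filter,
          ← Finset.sum_filter]
    _ = _ := by rw [Finset.sum_add_distrib, Finset.sum_add_distrib, upper, two_nsmul]; abel

theorem ENNReal.sq_lintegral_mul_le {α : Type*} [MeasurableSpace α] (μ : Measure α)
    {f g : α → ℝ≥0∞} (hf : AEMeasurable f μ) (hg : AEMeasurable g μ) :
    (∫⁻ a, f a * g a ∂μ) ^ 2 ≤ (∫⁻ a, f a ^ 2 ∂μ) * ∫⁻ a, g a ^ 2 ∂μ := by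
  have holder := ENNReal.lintegral_mul_le_Lp_mul_Lq μ Real.HolderConjugate.two_two hf hg
  simp only [ENNReal.rpow_two] at holder
  calc (∫⁻ a, f a * g a ∂μ) ^ 2
      ≤ ((∫⁻ a, f a ^ 2 ∂μ) ^ (1 / 2 : ℝ) * (∫⁻ a, g a ^ 2 ∂μ) ^ (1 / 2 : ℝ)) ^ 2 := by
        gcongr
        exact holder
    _ = (∫⁻ a, f a ^ 2 ∂μ) * ∫⁻ a, g a ^ 2 ∂μ := by
        rw [mul_pow, ← ENNReal.rpow_natCast, ← ENNReal.rpow_natCast, ← ENNReal.rpow_mul,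
          ← ENNReal.rpow_mul]
        norm_num

theorem ENNReal.one_sub_mul_le_of_sq_le {x p C : ℝ≥0∞} (hx : x ≠ ⊤) (hp : p ≤ 1)
    (h : x ^ 2 ≤ p * (x ^ 2 + C * x)) : (1 - p) * x ≤ C := by
  rcases eq_or_ne x 0 with rfl | hx0
  · simp
  have hle : x ≤ p * x + C := by
    refine (ENNReal.mul_le_mul_iff_left hx0 hx).1 ?_
    calc x * x = x ^ 2 := (sq x).symm
      _ ≤ p * (x ^ 2 + C * x) := h
      _ ≤ (p * x + C) * x := by
        rw [mul_add, add_mul, sq, ← mul_assoc, ← mul_assoc]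
        gcongr
        exact mul_le_of_le_one_left' hp
  rw [ENNReal.sub_mul fun _ _ => hx, one_mul]
  exact tsub_le_iff_left.2 hle

theorem ENNReal.sum_filter_lt_comp_sub_le_tsum (s : Finset ℕ) (k : ℕ) (f : ℕ → ℝ≥0∞) :
    ∑ l ∈ s with l < k, f (k - l) ≤ ∑' j, f j := by
  have hinj : Set.InjOn (k - ·) (s.filter (· < k) : Set ℕ) := by
    intro a ha b hb hab
    simp only [Finset.coe_filter, Set.mem_ofPred_eq] at ha hb
    simp only at hab
    omega
  rw [← Finset.sum_image hinj]
  exact ENNReal.sum_le_tsum _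

theorem ENNReal.sum_filter_lt_two_rpow_neg_sub_div_two_le (s : Finset ℕ) (k : ℕ) :
    ∑ l ∈ s with l < k, (2 : ℝ≥0∞) ^ (-(((k : ℝ) - l) / 2)) ≤ (1 - 2 ^ (-(1 / 2 : ℝ)))⁻¹ := by
  calc ∑ l ∈ s with l < k, (2 : ℝ≥0∞) ^ (-(((k : ℝ) - l) / 2))
      = ∑ l ∈ s with l < k, ((2 : ℝ≥0∞) ^ (-(1 / 2 : ℝ))) ^ (k - l) := by
        refine Finset.sum_congr rfl fun l hl => ?_
        rw [← ENNReal.rpow_natCast, ← ENNReal.rpow_mul,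
          Nat.cast_sub (Finset.mem_filter.1 hl).2.le]
        ring_nf
    _ ≤ ∑' j, ((2 : ℝ≥0∞) ^ (-(1 / 2 : ℝ))) ^ j := ENNReal.sum_filter_lt_comp_sub_le_tsum s k _
    _ = (1 - 2 ^ (-(1 / 2 : ℝ)))⁻¹ := ENNReal.tsum_geometric _

namespace MeasureTheory

variable {Ω : Type*} [MeasurableSpace Ω] (μ : Measure Ω)

theorem sq_sum_measure_le_measure_biUnion_mul {ι : Type*} {A : ι → Set Ω}
    (hA : ∀ k, MeasurableSet (A k)) (s : Finset ι) :
    (∑ k ∈ s, μ (A k)) ^ 2 ≤ μ (⋃ k ∈ s, A k) * ∑ k ∈ s, ∑ l ∈ s, μ (A k ∩ A l) := by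
  set U := ⋃ k ∈ s, A k
  set f : Ω → ℝ≥0∞ := fun ω => ∑ k ∈ s, (A k).indicator 1 ω
  have hU : MeasurableSet U := Finset.measurableSet_biUnion s fun k _ => hA k
  have hf : Measurable f := Finset.measurable_sum s fun k _ => measurable_one.indicator (hA k)
  have indicator_mul : ∀ (B C : Set Ω) ω,
      B.indicator (1 : Ω → ℝ≥0∞) ω * C.indicator 1 ω = (B ∩ C).indicator 1 ω := by
    intro B C ω
    rw [Set.inter_indicator_one]
    rfl
  have hfU : ∀ ω, f ω * U.indicator 1 ω = f ω := by
    intro ω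
    by_cases hω : ω ∈ U
    · simp [Set.indicator_of_mem hω]
    · have hωA : ∀ k ∈ s, ω ∉ A k := fun k hk h => hω (Set.mem_biUnion hk h)
      simp [f, Set.indicator_of_notMem hω,
        Finset.sum_eq_zero fun k hk => Set.indicator_of_notMem (hωA k hk) _]
  have int_f : ∫⁻ ω, f ω ∂μ = ∑ k ∈ s, μ (A k) := by
    rw [lintegral_finsetSum _ fun k _ => measurable_one.indicator (hA k)]
    simp only [lintegral_indicator_one (hA _)]
  have int_f_sq : ∫⁻ ω, f ω ^ 2 ∂μ = ∑ k ∈ s, ∑ l ∈ s, μ (A k ∩ A l) := by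
    simp only [f, sq, Finset.sum_mul_sum, indicator_mul]
    rw [lintegral_finsetSum _ fun k _ => Finset.measurable_sum _ fun l _ =>
      measurable_one.indicator ((hA k).inter (hA l))]
    refine Finset.sum_congr rfl fun k _ => ?_
    rw [lintegral_finsetSum _ fun l _ => measurable_one.indicator ((hA k).inter (hA l))]
    simp only [lintegral_indicator_one ((hA _).inter (hA _))]
  have int_indicator_sq : ∫⁻ ω, U.indicator 1 ω ^ 2 ∂μ = μ U := by
    simp only [sq, indicator_mul, Set.inter_self, lintegral_indicator_one hU]
  calc (∑ k ∈ s, μ (A k)) ^ 2 = (∫⁻ ω, f ω * U.indicator 1 ω ∂μ) ^ 2 := by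
        simp only [hfU, int_f]
    _ ≤ (∫⁻ ω, f ω ^ 2 ∂μ) * ∫⁻ ω, U.indicator 1 ω ^ 2 ∂μ :=
      ENNReal.sq_lintegral_mul_le μ hf.aemeasurable (measurable_one.indicator hU).aemeasurable
    _ = μ U * ∑ k ∈ s, ∑ l ∈ s, μ (A k ∩ A l) := by rw [int_f_sq, int_indicator_sq, mul_comm]

theorem sum_sum_measure_inter_le {ι : Type*} [LinearOrder ι] (A : ι → Set Ω) (s : Finset ι)
    (w : ι → ι → ℝ≥0∞) (c : ℝ≥0∞)
    (hcorr : ∀ l k, l < k → μ (A k ∩ A l) ≤ μ (A k) * μ (A l) + w k l * μ (A k))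
    (hw : ∀ k, ∑ l ∈ s with l < k, w k l ≤ c) :
    ∑ k ∈ s, ∑ l ∈ s, μ (A k ∩ A l) ≤
      (∑ k ∈ s, μ (A k)) ^ 2 + (1 + 2 * c) * ∑ k ∈ s, μ (A k) := by
  have row : ∀ k, ∑ l ∈ s with l < k, μ (A k ∩ A l) ≤
      ∑ l ∈ s with l < k, μ (A k) * μ (A l) + c * μ (A k) := by
    intro k
    calc ∑ l ∈ s with l < k, μ (A k ∩ A l)
        ≤ ∑ l ∈ s with l < k, (μ (A k) * μ (A l) + w k l * μ (A k)) :=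
          Finset.sum_le_sum fun l hl => hcorr l k (Finset.mem_filter.1 hl).2
      _ = ∑ l ∈ s with l < k, μ (A k) * μ (A l) + (∑ l ∈ s with l < k, w k l) * μ (A k) := by
          rw [Finset.sum_add_distrib, Finset.sum_mul]
      _ ≤ ∑ l ∈ s with l < k, μ (A k) * μ (A l) + c * μ (A k) := by gcongr; exact hw k
  have sq_expand : (∑ k ∈ s, μ (A k)) ^ 2 =
      ∑ k ∈ s, μ (A k) ^ 2 + 2 • ∑ k ∈ s, ∑ l ∈ s with l < k, μ (A k) * μ (A l) := by
    rw [sq, Finset.sum_mul_sum,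
      Finset.sum_sum_eq_sum_add_two_nsmul_sum_filter_lt s _ fun k l => mul_comm _ _]
    simp only [sq]
  rw [Finset.sum_sum_eq_sum_add_two_nsmul_sum_filter_lt s _ fun k l => by rw [Set.inter_comm]]
  simp only [Set.inter_self]
  calc ∑ k ∈ s, μ (A k) + 2 • ∑ k ∈ s, ∑ l ∈ s with l < k, μ (A k ∩ A l)
      ≤ ∑ k ∈ s, μ (A k) +
          2 • ∑ k ∈ s, (∑ l ∈ s with l < k, μ (A k) * μ (A l) + c * μ (A k)) := by
        gcongr with k; exact row k
    _ = 2 • ∑ k ∈ s, ∑ l ∈ s with l < k, μ (A k) * μ (A l) +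
          (1 + 2 * c) * ∑ k ∈ s, μ (A k) := by
        rw [Finset.sum_add_distrib, ← Finset.mul_sum, nsmul_eq_mul, nsmul_eq_mul]
        push_cast
        ring
    _ ≤ (∑ k ∈ s, μ (A k)) ^ 2 + (1 + 2 * c) * ∑ k ∈ s, μ (A k) := by
        rw [sq_expand]; gcongr; exact le_add_self

theorem measure_iUnion_ge_eq_one [IsProbabilityMeasure μ] {A : ℕ → Set Ω}
    (hA : ∀ k, MeasurableSet (A k)) (C : ℝ≥0∞) (hC : C ≠ ⊤)
    (hsum : ∀ s : Finset ℕ, ∑ k ∈ s, ∑ l ∈ s, μ (A k ∩ A l) ≤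
      (∑ k ∈ s, μ (A k)) ^ 2 + C * ∑ k ∈ s, μ (A k))
    (hdiv : ∑' k, μ (A k) = ⊤) (K : ℕ) :
    μ (⋃ k, ⋃ _ : K ≤ k, A k) = 1 := by
  set U := ⋃ k, ⋃ _ : K ≤ k, A k
  set S : ℕ → ℝ≥0∞ := fun n => ∑ i ∈ Finset.range n, μ (A (i + K))
  have deficit_mul_le : ∀ n, (1 - μ U) * S n ≤ C := by
    intro n
    set s := (Finset.range n).map (addRightEmbedding K)
    have hSn : S n = ∑ k ∈ s, μ (A k) := by simp [S, s]
    rw [hSn]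
    refine ENNReal.one_sub_mul_le_of_sq_le (ENNReal.sum_ne_top.2 fun k _ => measure_ne_top μ _)
      prob_le_one ?_
    calc (∑ k ∈ s, μ (A k)) ^ 2 ≤ μ (⋃ k ∈ s, A k) * ∑ k ∈ s, ∑ l ∈ s, μ (A k ∩ A l) :=
          sq_sum_measure_le_measure_biUnion_mul μ hA s
      _ ≤ μ U * ((∑ k ∈ s, μ (A k)) ^ 2 + C * ∑ k ∈ s, μ (A k)) := by
          gcongr
          · intro ω hω
            obtain ⟨k, hk, hωk⟩ := Set.mem_iUnion₂.1 hω
            obtain ⟨i, -, rfl⟩ := Finset.mem_map.1 hk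
            exact Set.mem_iUnion₂.2 ⟨i + K, Nat.le_add_left K i, hωk⟩
          · exact hsum s
  have tail_eq_top : ⨆ n, S n = ⊤ := by
    rw [← ENNReal.tsum_eq_iSup_nat]
    have split : ∑ i ∈ Finset.range K, μ (A i) + ∑' i, μ (A (i + K)) = ⊤ :=
      hdiv ▸ ENNReal.summable.sum_add_tsum_nat_add'
    exact (ENNReal.add_eq_top.1 split).resolve_left
      (ENNReal.sum_ne_top.2 fun k _ => measure_ne_top μ _)
  have deficit_mul_top : (1 - μ U) * ⊤ ≤ C := by
    rw [← tail_eq_top, ENNReal.mul_iSup]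
    exact iSup_le deficit_mul_le
  have deficit_eq_zero : 1 - μ U = 0 := by
    by_contra h
    rw [ENNReal.mul_top h] at deficit_mul_top
    exact hC (top_le_iff.1 deficit_mul_top)
  exact le_antisymm prob_le_one (tsub_eq_zero_iff_le.1 deficit_eq_zero)

end MeasureTheory

theorem quasi_independent_borel_cantelli_general
    {Ω : Type*} [MeasurableSpace Ω] (μ : Measure Ω) [IsProbabilityMeasure μ]
    (A : ℕ → Set Ω) (hA : ∀ k, MeasurableSet (A k)) (D : ℝ≥0∞) (hD' : D ≠ ⊤)
    (hcorr : ∀ ℓ k : ℕ, ℓ < k →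
      μ (A k ∩ A ℓ) ≤ μ (A k) * μ (A ℓ) +
        D * (2 : ℝ≥0∞) ^ (-(((k : ℝ) - ℓ) / 2)) * μ (A k))
    (hdiv : ∑' k, μ (A k) = ⊤) :
    μ (⋂ K : ℕ, ⋃ k : ℕ, ⋃ _ : K ≤ k, A k) = 1 := by
  set c : ℝ≥0∞ := D * (1 - 2 ^ (-(1 / 2 : ℝ)))⁻¹
  have hc : c ≠ ⊤ := ENNReal.mul_ne_top hD' <| ENNReal.inv_ne_top.2 <| (tsub_pos_iff_lt.2 <|
    ENNReal.rpow_lt_one_of_one_lt_of_neg (by norm_num) (by norm_num)).ne'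
  have hsum : ∀ s : Finset ℕ, ∑ k ∈ s, ∑ l ∈ s, μ (A k ∩ A l) ≤
      (∑ k ∈ s, μ (A k)) ^ 2 + (1 + 2 * c) * ∑ k ∈ s, μ (A k) := fun s =>
    sum_sum_measure_inter_le μ A s _ c hcorr fun k => by
      rw [← Finset.mul_sum]
      exact mul_le_mul_right (ENNReal.sum_filter_lt_two_rpow_neg_sub_div_two_le s k) D
  have htail : ∀ K, μ (⋃ k, ⋃ _ : K ≤ k, A k) = 1 :=
    measure_iUnion_ge_eq_one μ hA _ (by finiteness) hsum hdiv
  have htail_meas : ∀ K : ℕ, MeasurableSet (⋃ k, ⋃ _ : K ≤ k, A k) := fun K =>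
    .iUnion fun k => .iUnion fun _ => hA k
  rw [← prob_compl_eq_zero_iff (.iInter htail_meas), Set.compl_iInter]
  exact measure_iUnion_null fun K => (prob_compl_eq_zero_iff (htail_meas K)).2 (htail K)

theorem quasi_independent_borel_cantelli
    {Ω : Type*} [MeasurableSpace Ω] (μ : Measure Ω) [IsProbabilityMeasure μ]
    (A : ℕ → Set Ω) (hA : ∀ k, MeasurableSet (A k)) (D : ℝ≥0∞) (hD : 0 < D) (hD' : D ≠ ⊤)
    (hcorr : ∀ ℓ k : ℕ, ℓ < k →
      μ (A k ∩ A ℓ) ≤ μ (A k) * μ (A ℓ) +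
        D * (2 : ℝ≥0∞) ^ (-(((k : ℝ) - ℓ) / 2)) * μ (A k))
    (hdiv : ∑' k, μ (A k) = ⊤) :
    μ (⋂ K : ℕ, ⋃ k : ℕ, ⋃ _ : K ≤ k, A k) = 1 :=
  quasi_independent_borel_cantelli_general μ A hA D hD' hcorr hdiv
end

section
/- A badly approximable irrational θ satisfies Kurzweil's property: if θ is irrational and there exists c > 0 with ‖nθ‖ ≥ c/n for all n ≥ 1, then for every positive non-increasing sequence ψ with ∑_{n≥1} ψ(n) = ∞, one has ∑_{k≥0} ∑_{n=q_k}^{q_{k+1}-1} min(ψ(n), ‖q_k θ‖) = ∞. -/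
open MeasureTheory Filter
open scoped ENNReal Classical

/-- Cauchy condensation turns `min (ψ n) (c / n)` into `min (2 ^ k * ψ (2 ^ k)) c`, and a summable
sequence eventually drops below `c`. -/
theorem summable_of_summable_min_div {ψ : ℕ → ℝ} (hψ : Antitone ψ) (hψ₀ : ∀ n, 0 ≤ ψ n)
    {c : ℝ} (hc : 0 < c) (h : Summable fun n : ℕ => min (ψ n) (c / n)) : Summable ψ := by
  rw [← summable_condensed_iff_of_nonneg hψ₀ fun m n _ hmn => hψ hmn]
  rw [← summable_condensed_iff_of_nonneg (fun n => le_min (hψ₀ n) (by positivity))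
    fun m n hm hmn => min_le_min (hψ hmn) (div_le_div_of_nonneg_left hc.le (by exact_mod_cast hm)
      (by exact_mod_cast hmn))] at h
  have h_eq : ∀ k : ℕ, (2 : ℝ) ^ k * min (ψ (2 ^ k)) (c / (2 ^ k : ℕ)) =
      min ((2 : ℝ) ^ k * ψ (2 ^ k)) c := fun k => by
    rw [mul_min_of_nonneg _ _ (by positivity), Nat.cast_pow, Nat.cast_ofNat,
      mul_div_cancel₀ _ (by positivity)]
  simp only [h_eq] at h
  refine h.congr_atTop ?_
  filter_upwards [h.tendsto_atTop_zero.eventually (gt_mem_nhds hc)] with k hk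
  exact min_eq_left ((min_lt_iff.mp hk).resolve_right (lt_irrefl c)).le

theorem Finset.sum_range_sum_Ico_of_monotone {M : Type*} [AddCommMonoid M] (f : ℕ → M)
    {q : ℕ → ℕ} (hq : Monotone q) (K : ℕ) :
    ∑ k ∈ Finset.range K, ∑ n ∈ Finset.Ico (q k) (q (k + 1)), f n =
      ∑ n ∈ Finset.Ico (q 0) (q K), f n := by
  induction K with
  | zero => simp
  | succ K ih =>
    rw [Finset.sum_range_succ, ih,
      Finset.sum_Ico_consecutive _ (hq K.zero_le) (hq K.le_succ)]

theorem summable_of_summable_sum_Ico {f : ℕ → ℝ} (hf : ∀ n, 0 ≤ f n) {q : ℕ → ℕ}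
    (hq : Monotone q) (hq_top : Tendsto q atTop atTop)
    (h : Summable fun k => ∑ n ∈ Finset.Ico (q k) (q (k + 1)), f n) : Summable f := by
  refine summable_of_sum_range_le hf
    (c := ∑ n ∈ Finset.range (q 0), f n + ∑' k, ∑ n ∈ Finset.Ico (q k) (q (k + 1)), f n)
    fun N => ?_
  obtain ⟨K, hK⟩ := (hq_top.eventually_ge_atTop N).exists
  calc ∑ n ∈ Finset.range N, f n
      ≤ ∑ n ∈ Finset.range (q K), f n :=
        Finset.sum_le_sum_of_subset_of_nonneg (Finset.range_subset_range.mpr hK)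
          fun n _ _ => hf n
    _ = ∑ n ∈ Finset.range (q 0), f n +
          ∑ k ∈ Finset.range K, ∑ n ∈ Finset.Ico (q k) (q (k + 1)), f n := by
        rw [Finset.sum_range_sum_Ico_of_monotone f hq,
          Finset.sum_range_add_sum_Ico _ (hq K.zero_le)]
    _ ≤ _ := add_le_add_right (h.sum_le_tsum _ fun k _ => Finset.sum_nonneg fun n _ => hf n) _

theorem Irrational.natCast_le_dens {θ : ℝ} (hθ : Irrational θ) (k : ℕ) :
    (k : ℝ) ≤ (GenContFract.of θ).dens k := by
  have h_nonterm : ¬(GenContFract.of θ).TerminatedAt (k - 1) := fun h => by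
    obtain ⟨r, hr⟩ := (GenContFract.terminates_iff_rat θ).mp ⟨_, h⟩
    exact hθ ⟨r, hr.symm⟩
  calc (k : ℝ) ≤ Nat.fib (k + 1) := by
        exact_mod_cast Nat.le_of_add_le_add_right (k + 1).le_fib_add_one
    _ ≤ _ := GenContFract.succ_nth_fib_le_of_nth_den (Or.inr h_nonterm)

theorem badly_approximable_divergence
    (θ : ℝ) (hθ : Irrational θ) (q : ℕ → ℕ)
    (hq : ∀ k, (q k : ℝ) = (GenContFract.of θ).dens k)
    (c : ℝ) (hc : 0 < c) (hbad : ∀ n : ℕ, 1 ≤ n → c / n ≤ distNearestInt ((n : ℝ) * θ))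
    (ψ : ℕ → ℝ) (hψpos : ∀ n, 0 < ψ n) (hψmono : ∀ m n, m ≤ n → ψ n ≤ ψ m)
    (hdiv : ¬ Summable ψ) :
    ¬ Summable fun k =>
      ∑ n ∈ Finset.Ico (q k) (q (k + 1)), min (ψ n) (distNearestInt ((q k : ℝ) * θ)) := by
  have hq_mono : Monotone q := monotone_nat_of_le_succ fun k => by
    exact_mod_cast (hq k).trans_le (GenContFract.of_den_mono.trans_eq (hq (k + 1)).symm)
  have hq_one (k : ℕ) : 1 ≤ q k := by
    have h0 : q 0 = 1 := by exact_mod_cast (hq 0).trans GenContFract.zeroth_den_eq_one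
    exact h0 ▸ hq_mono k.zero_le
  have hq_top : Tendsto q atTop atTop := tendsto_natCast_atTop_iff.mp <|
    tendsto_atTop_mono (fun k => (hθ.natCast_le_dens k).trans_eq (hq k).symm)
      tendsto_natCast_atTop_atTop
  set g : ℕ → ℝ := fun n => min (ψ n) (c / n)
  have hg_nonneg (n : ℕ) : 0 ≤ g n := le_min (hψpos n).le (by positivity)
  have hg_le_block (k : ℕ) : ∑ n ∈ Finset.Ico (q k) (q (k + 1)), g n ≤
      ∑ n ∈ Finset.Ico (q k) (q (k + 1)), min (ψ n) (distNearestInt ((q k : ℝ) * θ)) := by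
    refine Finset.sum_le_sum fun n hn => min_le_min_left _ ?_
    calc c / n ≤ c / q k := div_le_div_of_nonneg_left hc.le (by exact_mod_cast hq_one k)
          (by exact_mod_cast (Finset.mem_Ico.mp hn).1)
      _ ≤ _ := hbad _ (hq_one k)
  intro hsum
  have hg : Summable g := summable_of_summable_sum_Ico hg_nonneg hq_mono hq_top <|
    hsum.of_nonneg_of_le (fun k => Finset.sum_nonneg fun n _ => hg_nonneg n) hg_le_block
  exact hdiv (summable_of_summable_min_div (fun m n => hψmono m n) (fun n => (hψpos n).le) hc hg)
end

section
/- Let φ : ℕ → ℝ be positive, non-decreasing, and bounded (say φ(n) ≤ c with c ≥ 2), and θ irrational with convergent denominators q_k. Then ∑_{k≥0} ∑_{n=q_k}^{q_{k+1}-1} min(1/(n·φ(n)), ‖q_k θ‖) = ∞. -/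
open MeasureTheory Filter
open scoped ENNReal Classical

/-!
For `k ≥ 1` every term of the `k`-th block is at least `1 / (c q_{k+1})`: the first entry of the
`min` because `n < q_{k+1}` and `φ ≤ c`, the second because `‖q_k θ‖ ≥ 1 / (2 q_{k+1})`, which
follows from the determinant identity `p_k q_{k+1} - q_k p_{k+1} = ±1` and `q_{k+2} ≥ 2 q_k`.
Hence the `k`-th block is at least `(1 - q_k / q_{k+1}) / c`, and as `q_{k+2} ≥ q_{k+1} + q_k`,
two consecutive blocks always add up to at least `1 / (2c)`, so the terms of the series do not
tend to zero.
-/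

open GenContFract (of)

namespace GenContFract

variable {K : Type*} [Field K] [LinearOrder K] [FloorRing K] {v : K} {n : ℕ}

theorem exists_int_eq_of_contsAux_a (n : ℕ) : ∃ z : ℤ, ((of v).contsAux n).a = z := by
  induction n using Nat.twoStepInduction with
  | zero => exact ⟨1, by rw [zeroth_contAux_eq_one_zero, Int.cast_one]⟩
  | one => exact ⟨⌊v⌋, by rw [first_contAux_eq_h_one, of_h_eq_floor]⟩
  | more n ih₀ ih₁ =>
    rcases hs : (of v).s.get? n with _ | gp
    · rwa [contsAux_stable_step_of_terminated hs]
    · obtain ⟨ha, b, hb⟩ := of_partNum_eq_one_and_exists_int_partDen_eq hs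
      obtain ⟨z₀, hz₀⟩ := ih₀
      obtain ⟨z₁, hz₁⟩ := ih₁
      refine ⟨b * z₁ + z₀, ?_⟩
      rw [contsAux_recurrence hs rfl rfl, ha, hb, hz₀, hz₁]
      push_cast
      ring

theorem exists_int_eq_of_num (n : ℕ) : ∃ z : ℤ, (of v).nums n = z := by
  rw [num_eq_conts_a, nth_cont_eq_succ_nth_contAux]
  exact exists_int_eq_of_contsAux_a (n + 1)

variable [IsStrictOrderedRing K]

theorem one_le_of_den : 1 ≤ (of v).dens n := by
  induction n with
  | zero => rw [zeroth_den_eq_one]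
  | succ n ih => exact ih.trans of_den_mono

theorem of_dens_add_dens_le (h : ¬(of v).TerminatedAt (n + 1)) :
    (of v).dens (n + 1) + (of v).dens n ≤ (of v).dens (n + 2) := by
  obtain ⟨gp, hgp⟩ := Option.ne_none_iff_exists'.mp h
  have hb : 1 ≤ gp.b := of_one_le_get?_partDen (partDen_eq_s_b hgp)
  have ha : gp.a = 1 := (of_partNum_eq_one_and_exists_int_partDen_eq hgp).1
  rw [dens_recurrence hgp rfl rfl, ha, one_mul]
  have := (zero_le_one.trans one_le_of_den : (0 : K) ≤ (of v).dens (n + 1))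
  nlinarith

theorem abs_den_mul_sub_num_le (h : ¬(of v).TerminatedAt n) :
    |(of v).dens n * v - (of v).nums n| ≤ 1 / (of v).dens (n + 1) := by
  have hq : 0 < (of v).dens n := zero_lt_one.trans_le one_le_of_den
  have happrox := abs_sub_convs_le h
  rw [conv_eq_num_div_den] at happrox
  calc |(of v).dens n * v - (of v).nums n|
      = (of v).dens n * |v - (of v).nums n / (of v).dens n| := by
        rw [← abs_of_pos hq, ← abs_mul, abs_of_pos hq, mul_sub, mul_div_cancel₀ _ hq.ne']
    _ ≤ (of v).dens n * (1 / ((of v).dens n * (of v).dens (n + 1))) := by gcongr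
    _ = 1 / (of v).dens (n + 1) := by field_simp

theorem one_div_two_mul_den_le_abs_den_mul_sub_num (h : ¬(of v).TerminatedAt (n + 1)) :
    1 / (2 * (of v).dens (n + 1)) ≤ |(of v).dens n * v - (of v).nums n| := by
  set q : ℕ → K := (of v).dens
  set p : ℕ → K := (of v).nums
  have hq₀ : 0 < q n := zero_lt_one.trans_le one_le_of_den
  have hq₁ : 0 < q (n + 1) := zero_lt_one.trans_le one_le_of_den
  have hq₂ : 2 * q n ≤ q (n + 2) := by
    linarith [of_dens_add_dens_le h, of_den_mono (v := v) (n := n)]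
  have hdet : p n * q (n + 1) - q n * p (n + 1) = (-1) ^ (n + 1) :=
    SimpContFract.determinant (s := SimpContFract.of v) (mt (terminated_stable n.le_succ) h)
  have happrox : q n * |q (n + 1) * v - p (n + 1)| ≤ 1 / 2 :=
    calc q n * |q (n + 1) * v - p (n + 1)| ≤ q n * (1 / q (n + 2)) := by
          gcongr; exact abs_den_mul_sub_num_le h
      _ ≤ 1 / 2 := by rw [mul_one_div, div_le_iff₀ (by linarith)]; linarith
  have : 1 ≤ q (n + 1) * |q n * v - p n| + 1 / 2 := by
    calc 1 = |q (n + 1) * -(q n * v - p n) + q n * (q (n + 1) * v - p (n + 1))| := by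
          rw [← abs_neg_one_pow (n + 1), ← hdet]; ring_nf
      _ ≤ q (n + 1) * |q n * v - p n| + q n * |q (n + 1) * v - p (n + 1)| := by
          refine (abs_add_le _ _).trans_eq ?_
          rw [abs_mul, abs_mul, abs_neg, abs_of_pos hq₀, abs_of_pos hq₁]
      _ ≤ q (n + 1) * |q n * v - p n| + 1 / 2 := by gcongr
  rw [div_le_iff₀ (by positivity)]
  linarith

theorem one_div_two_mul_den_le_abs_den_mul_sub_intCast (h : ¬(of v).TerminatedAt (n + 2))
    (m : ℤ) :
    1 / (2 * (of v).dens (n + 2)) ≤ |(of v).dens (n + 1) * v - m| := by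
  obtain ⟨z, hz⟩ := exists_int_eq_of_num (v := v) (n + 1)
  obtain rfl | hmz := eq_or_ne m z
  · rw [← hz]; exact one_div_two_mul_den_le_abs_den_mul_sub_num h
  have hq₂ : 2 ≤ (of v).dens (n + 2) := by
    linarith [of_dens_add_dens_le (mt (terminated_stable n.succ.le_succ) h),
      one_le_of_den (v := v) (n := n), one_le_of_den (v := v) (n := n + 1)]
  have happrox : |(of v).dens (n + 1) * v - z| ≤ 1 / 2 :=
    hz ▸ (abs_den_mul_sub_num_le (mt (terminated_stable (n + 1).le_succ) h)).trans
      (by rw [div_le_div_iff₀ (by positivity) two_pos]; linarith)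
  have hone : (1 : K) ≤ |(m : K) - z| := by exact_mod_cast Int.one_le_abs (sub_ne_zero.mpr hmz)
  calc 1 / (2 * (of v).dens (n + 2)) ≤ 1 / 4 := by
        rw [div_le_div_iff₀ (by positivity) (by norm_num)]; linarith
    _ ≤ |(m : K) - z| - |(of v).dens (n + 1) * v - z| := by linarith
    _ ≤ |(of v).dens (n + 1) * v - m| := by
        rw [abs_sub_comm _ (m : K)]
        exact (abs_sub_abs_le_abs_sub _ _).trans_eq (by ring_nf)

theorem of_not_terminatedAt_of_irrational {θ : ℝ} (hθ : Irrational θ) (n : ℕ) :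
    ¬(of θ).TerminatedAt n := fun h =>
  let ⟨r, hr⟩ := (terminates_iff_rat θ).mp ⟨n, h⟩
  hθ ⟨r, hr.symm⟩

end GenContFract


theorem not_summable_of_eventually_le_add_succ {f : ℕ → ℝ} {ε : ℝ} (hε : 0 < ε)
    (h : ∀ᶠ k in atTop, ε ≤ f k + f (k + 1)) : ¬Summable f := fun hf =>
  have hlim : Tendsto (fun k => f k + f (k + 1)) atTop (nhds 0) := by
    simpa using hf.tendsto_atTop_zero.add (hf.tendsto_atTop_zero.comp (tendsto_add_atTop_nat 1))
  hε.not_ge (ge_of_tendsto hlim h)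

theorem one_half_le_sub_div_add_sub_div {a b c : ℝ} (ha : 0 < a) (hab : a ≤ b) (hc : b + a ≤ c) :
    1 / 2 ≤ (b - a) / b + (c - b) / c := by
  have hb : 0 < b := ha.trans_le hab
  have hc' : 0 < c := by linarith
  rw [div_add_div _ _ hb.ne' hc'.ne', le_div_iff₀ (by positivity)]
  nlinarith

theorem sub_div_le_sum_Ico_min {φ : ℕ → ℝ} (hφpos : ∀ n, 0 < φ n) {c : ℝ} (hc : 2 ≤ c)
    (hφbdd : ∀ n, φ n ≤ c) {a b : ℕ} (ha : 0 < a) (hab : a ≤ b) {δ : ℝ} (hδ : 1 / (2 * b) ≤ δ) :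
    ((b : ℝ) - a) / (c * b) ≤ ∑ n ∈ Finset.Ico a b, min (1 / ((n : ℝ) * φ n)) δ := by
  have hb : (0 : ℝ) < b := by exact_mod_cast ha.trans_le hab
  have hterm : ∀ n ∈ Finset.Ico a b, 1 / (c * b) ≤ min (1 / ((n : ℝ) * φ n)) δ := by
    intro n hn
    obtain ⟨han, hnb⟩ := Finset.mem_Ico.mp hn
    have hn : (0 : ℝ) < n := by exact_mod_cast ha.trans_le han
    refine le_min (one_div_le_one_div_of_le (mul_pos hn (hφpos n)) ?_) (hδ.trans' ?_)
    · rw [mul_comm c]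
      exact mul_le_mul (by exact_mod_cast hnb.le) (hφbdd n) (hφpos n).le hb.le
    · exact one_div_le_one_div_of_le (by positivity) (by gcongr)
  calc ((b : ℝ) - a) / (c * b) = (Finset.Ico a b).card • (1 / (c * b)) := by
        rw [Nat.card_Ico, nsmul_eq_mul, Nat.cast_sub hab]; ring
    _ ≤ _ := Finset.card_nsmul_le_sum _ _ _ hterm

theorem not_summable_sum_Ico_min {q : ℕ → ℕ} (hq : ∀ k, 0 < q k)
    (hrec : ∀ k, q (k + 1) + q k ≤ q (k + 2)) {δ : ℕ → ℝ}
    (hδ : ∀ k, 1 / (2 * (q (k + 2) : ℝ)) ≤ δ (k + 1)) {φ : ℕ → ℝ} (hφpos : ∀ n, 0 < φ n)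
    {c : ℝ} (hc : 2 ≤ c) (hφbdd : ∀ n, φ n ≤ c) :
    ¬Summable fun k => ∑ n ∈ Finset.Ico (q k) (q (k + 1)), min (1 / ((n : ℝ) * φ n)) (δ k) := by
  have hmono (k : ℕ) : q (k + 1) ≤ q (k + 2) := le_of_add_le_left (hrec k)
  have hblock (k : ℕ) := sub_div_le_sum_Ico_min hφpos hc hφbdd (hq (k + 1)) (hmono k) (hδ k)
  refine not_summable_of_eventually_le_add_succ (ε := 1 / (2 * c)) (by positivity)
    (eventually_atTop.mpr ⟨1, fun k hk => ?_⟩)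
  obtain ⟨k, rfl⟩ := Nat.exists_eq_add_of_le' hk
  have hpair := one_half_le_sub_div_add_sub_div (a := q (k + 1)) (b := q (k + 2)) (c := q (k + 3))
    (by exact_mod_cast hq _) (by exact_mod_cast hmono k) (by exact_mod_cast hrec (k + 1))
  calc 1 / (2 * c) = (1 / 2) / c := by ring
    _ ≤ ((q (k + 2) - q (k + 1)) / q (k + 2) + (q (k + 3) - q (k + 2)) / q (k + 3)) / c := by
        gcongr
    _ = (q (k + 2) - q (k + 1)) / (c * q (k + 2))
          + (q (k + 3) - q (k + 2)) / (c * q (k + 3)) := by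
        field_simp
    _ ≤ _ := add_le_add (hblock k) (hblock (k + 1))

theorem bounded_phi_divergence_general
    (θ : ℝ) (hθ : Irrational θ) (q : ℕ → ℕ)
    (hq : ∀ k, (q k : ℝ) = (GenContFract.of θ).dens k)
    (φ : ℕ → ℝ) (hφpos : ∀ n, 0 < φ n)
    (c : ℝ) (hc : 2 ≤ c) (hφbdd : ∀ n, φ n ≤ c) :
    ¬ Summable fun k =>
      ∑ n ∈ Finset.Ico (q k) (q (k + 1)),
        min (1 / ((n : ℝ) * φ n)) (distNearestInt ((q k : ℝ) * θ)) := by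
  have hnt := GenContFract.of_not_terminatedAt_of_irrational hθ
  refine not_summable_sum_Ico_min (fun k => ?_) (fun k => ?_) (fun k => ?_) hφpos hc hφbdd
  · rw [← Nat.cast_pos (α := ℝ), hq]
    exact zero_lt_one.trans_le GenContFract.one_le_of_den
  · rw [← Nat.cast_le (α := ℝ), Nat.cast_add, hq, hq, hq]
    exact GenContFract.of_dens_add_dens_le (hnt _)
  · rw [distNearestInt, hq, hq]
    exact GenContFract.one_div_two_mul_den_le_abs_den_mul_sub_intCast (hnt _) _

theorem bounded_phi_divergence
    (θ : ℝ) (hθ : Irrational θ) (q : ℕ → ℕ)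
    (hq : ∀ k, (q k : ℝ) = (GenContFract.of θ).dens k)
    (φ : ℕ → ℝ) (hφpos : ∀ n, 0 < φ n) (hφmono : ∀ m n, m ≤ n → φ m ≤ φ n)
    (c : ℝ) (hc : 2 ≤ c) (hφbdd : ∀ n, φ n ≤ c) :
    ¬ Summable fun k =>
      ∑ n ∈ Finset.Ico (q k) (q (k + 1)),
        min (1 / ((n : ℝ) * φ n)) (distNearestInt ((q k : ℝ) * θ)) :=
  bounded_phi_divergence_general θ hθ q hq φ hφpos c hc hφbdd
end

section
/- Let φ be positive non-decreasing and θ irrational with convergent denominators q_k. Define Λ = {k ≥ 1 : φ(q_{k+1}) ≤ 2φ(q_k)}. Then ∑_{k∉Λ} log(min(φ(q_k), q_{k+1}/q_k))/φ(q_k) ≤ ∑_{k∉Λ} log(φ(q_k))/φ(q_k) < ∞, and consequently ∑_{k≥0} log(min(φ(q_k),q_{k+1}/q_k))/φ(q_{k+1}) = ∞ if and only if ∑_{k≥0} log(min(φ(q_k),q_{k+1}/q_k))/φ(q_k) = ∞. -/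
open MeasureTheory Filter Real
open scoped ENNReal Classical

/-!
At every `k ≥ 1` outside `Λ` the value `G k = φ (q k)` at least doubles at the next index, so
`G k ≥ 2 ^ n * G 0` when `n` such doubling steps occur below `k`. Hence along `Λᶜ` every negative
power of `G`, and with it `|log G| / G`, is dominated by a geometric series. On `Λ` the
denominators `G k ≤ G (k + 1) ≤ 2 G k` are comparable, and on `Λᶜ` both series are dominated by
`|log G| / G`, because `q (k + 1) / q k ≥ 1` gives
`|log (min (G k) (q (k + 1) / q k))| ≤ |log (G k)|`.
-/

open Set

lemma abs_log_min_le_abs_log {x r : ℝ} (hr : 1 ≤ r) :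
    |log (min x r)| ≤ |log x| := by
  rcases min_cases x r with ⟨h, _⟩ | ⟨h, hrx⟩
  · rw [h]
  · rw [h, abs_of_nonneg (log_nonneg hr), abs_of_nonneg (log_nonneg (hr.trans hrx.le))]
    exact log_le_log (by linarith) hrx.le

lemma abs_log_div_self_le {x : ℝ} (hx : 0 < x) :
    |log x| / x ≤ 2 * x ^ (-1 / 2 : ℝ) + 2 * x ^ (-3 / 2 : ℝ) := by
  have hlog : log x ≤ 2 * x ^ (1 / 2 : ℝ) := by
    have := log_le_rpow_div hx.le (ε := 1 / 2) (by norm_num)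
    linarith
  have hlog_inv : -log x ≤ 2 * x ^ (-1 / 2 : ℝ) := by
    have := log_le_rpow_div (inv_pos.2 hx).le (ε := 1 / 2) (by norm_num)
    rw [log_inv, inv_rpow hx.le, ← rpow_neg hx.le] at this
    norm_num at this ⊢
    linarith
  have hpos : 0 ≤ x ^ (1 / 2 : ℝ) := rpow_nonneg hx.le _
  have hpos' : 0 ≤ x ^ (-1 / 2 : ℝ) := rpow_nonneg hx.le _
  rw [div_le_iff₀ hx, add_mul, mul_assoc, mul_assoc, ← rpow_add_one hx.ne',
    ← rpow_add_one hx.ne']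
  norm_num at hlog hlog_inv hpos hpos' ⊢
  rw [abs_le]
  constructor <;> linarith

lemma two_pow_count_mul_le {g : ℕ → ℝ} (hg : Monotone g) (k : ℕ) :
    2 ^ Nat.count (fun i => 2 * g i ≤ g (i + 1)) k * g 0 ≤ g k := by
  induction k with
  | zero => simp
  | succ k ih =>
    rw [Nat.count_succ]
    split_ifs with hk
    · rw [pow_succ]
      linarith
    · simpa using ih.trans (hg k.le_succ)

lemma summable_indicator_rpow_neg_of_doubling {g : ℕ → ℝ} (hg : Monotone g) (hg0 : 0 < g 0)
    {s : ℝ} (hs : 0 < s) :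
    Summable ({k | 2 * g k ≤ g (k + 1)}.indicator fun k => g k ^ (-s)) := by
  set p : ℕ → Prop := fun k => 2 * g k ≤ g (k + 1)
  rw [← summable_subtype_iff_indicator]
  have hgeom : Summable fun n : ℕ => g 0 ^ (-s) * ((2 : ℝ) ^ (-s)) ^ n :=
    (summable_geometric_of_lt_one (by positivity)
      (rpow_lt_one_of_one_lt_of_neg one_lt_two (by linarith))).mul_left _
  have hinj : Function.Injective fun k : {k | p k} => Nat.count p k :=
    fun a b h => Subtype.ext (Nat.count_injective a.2 b.2 h)
  refine Summable.of_nonneg_of_le (fun k => rpow_nonneg (hg0.le.trans (hg k.1.zero_le)) _)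
    (fun k => ?_) (hgeom.comp_injective hinj)
  calc g k ^ (-s) ≤ (2 ^ Nat.count p k * g 0) ^ (-s) :=
        rpow_le_rpow_of_nonpos (by positivity) (two_pow_count_mul_le hg k) (by linarith)
    _ = g 0 ^ (-s) * ((2 : ℝ) ^ (-s)) ^ Nat.count p k := by
        rw [mul_rpow (by positivity) hg0.le, ← rpow_natCast, ← rpow_natCast, ← rpow_mul zero_le_two,
          ← rpow_mul zero_le_two, mul_comm, mul_comm (Nat.count p k : ℝ)]

lemma summable_indicator_abs_log_div_self_of_doubling {g : ℕ → ℝ} (hg : Monotone g)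
    (hg0 : 0 < g 0) :
    Summable ({k | 2 * g k ≤ g (k + 1)}.indicator fun k => |log (g k)| / g k) := by
  refine Summable.of_nonneg_of_le (fun k => indicator_nonneg (fun k _ => ?_) k) (fun k => ?_)
    (((summable_indicator_rpow_neg_of_doubling hg hg0 (s := 1 / 2) (by norm_num)).mul_left 2).add
      ((summable_indicator_rpow_neg_of_doubling hg hg0 (s := 3 / 2) (by norm_num)).mul_left 2))
  · exact div_nonneg (abs_nonneg _) (hg0.le.trans (hg k.zero_le))
  · by_cases hk : k ∈ {k | 2 * g k ≤ g (k + 1)}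
    · simp only [indicator_of_mem hk]
      exact (abs_log_div_self_le (hg0.trans_le (hg k.zero_le))).trans_eq (by norm_num)
    · simp [indicator_of_notMem hk]

lemma summable_indicator_of_abs_le {ι : Type*} {f g : ι → ℝ} {s : Set ι}
    (hg : Summable (s.indicator g)) (h : ∀ i ∈ s, |f i| ≤ g i) : Summable (s.indicator f) := by
  refine hg.of_norm_bounded fun i => ?_
  by_cases hi : i ∈ s
  · simpa [indicator_of_mem hi] using h i hi
  · simp [indicator_of_notMem hi]

lemma summable_div_succ_iff_summable_div {a G : ℕ → ℝ} (hG : Monotone G) (hGpos : ∀ k, 0 < G k)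
    {Λ : Set ℕ} (hΛ : ∀ k ∈ Λ, G (k + 1) ≤ 2 * G k)
    (hΛc : Summable (Λᶜ.indicator fun k => a k / G k)) :
    Summable (fun k => a k / G (k + 1)) ↔ Summable (fun k => a k / G k) := by
  constructor
  · intro h
    have hΛsum : Summable (Λ.indicator fun k => a k / G k) := by
      refine summable_indicator_of_abs_le ((h.abs.mul_left 2).indicator Λ) fun k hk => ?_
      rw [abs_div, abs_div, abs_of_pos (hGpos k), abs_of_pos (hGpos (k + 1)), mul_div_assoc',
          div_le_div_iff₀ (hGpos k) (hGpos (k + 1))]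
      nlinarith [hΛ k hk, abs_nonneg (a k)]
    exact (hΛsum.add hΛc).congr (indicator_self_add_compl_apply Λ _)
  · intro h
    refine h.abs.of_norm_bounded fun k => ?_
    rw [Real.norm_eq_abs, abs_div, abs_div, abs_of_pos (hGpos k), abs_of_pos (hGpos (k + 1))]
    exact div_le_div_of_nonneg_left (abs_nonneg _) (hGpos k) (hG k.le_succ)

lemma summable_compl_indicator_abs_log_div_self {G : ℕ → ℝ} (hG : Monotone G)
    (hGpos : ∀ k, 0 < G k) :
    Summable ({k | 1 ≤ k ∧ G (k + 1) ≤ 2 * G k}ᶜ.indicator fun k => |log (G k)| / G k) := by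
  refine (summable_indicator_abs_log_div_self_of_doubling hG (hGpos 0)).of_norm_bounded_eventually
    ((eventually_cofinite_ne 0).mono fun k hk0 => ?_)
  by_cases hkΛ : k ∈ {k | 1 ≤ k ∧ G (k + 1) ≤ 2 * G k}
  · rw [indicator_of_notMem (not_not_intro hkΛ), norm_zero]
    exact indicator_nonneg (fun k _ => div_nonneg (abs_nonneg _) (hGpos k).le) k
  · have hk : k ∈ {k | 2 * G k ≤ G (k + 1)} :=
      (not_le.1 fun h => hkΛ ⟨Nat.one_le_iff_ne_zero.2 hk0, h⟩).le
    rw [indicator_of_mem hkΛ, indicator_of_mem hk,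
      Real.norm_of_nonneg (div_nonneg (abs_nonneg _) (hGpos k).le)]

theorem GenContFract.monotone_of_dens {K : Type*} [Field K] [LinearOrder K] [IsStrictOrderedRing K]
    [FloorRing K] (v : K) : Monotone (GenContFract.of v).dens :=
  monotone_nat_of_le_succ fun _ => of_den_mono

theorem GenContFract.one_le_of_dens {K : Type*} [Field K] [LinearOrder K] [IsStrictOrderedRing K]
    [FloorRing K] (v : K) (n : ℕ) : 1 ≤ (GenContFract.of v).dens n :=
  zeroth_den_eq_one (g := GenContFract.of v) ▸ monotone_of_dens v n.zero_le

theorem lambda_complement_summable_and_equivalence_general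
    (θ : ℝ) (q : ℕ → ℕ)
    (hq : ∀ k, (q k : ℝ) = (GenContFract.of θ).dens k)
    (φ : ℕ → ℝ) (hφpos : ∀ n, 0 < φ n) (hφmono : ∀ m n, m ≤ n → φ m ≤ φ n) :
    (∀ k : ℕ, k ∉ {k : ℕ | 1 ≤ k ∧ φ (q (k + 1)) ≤ 2 * φ (q k)} →
      Real.log (min (φ (q k)) ((q (k + 1) : ℝ) / (q k : ℝ))) / φ (q k) ≤
        Real.log (φ (q k)) / φ (q k)) ∧
    Summable (({k : ℕ | 1 ≤ k ∧ φ (q (k + 1)) ≤ 2 * φ (q k)}ᶜ).indicator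
      (fun k => Real.log (φ (q k)) / φ (q k))) ∧
    ((¬ Summable fun k =>
        Real.log (min (φ (q k)) ((q (k + 1) : ℝ) / (q k : ℝ))) / φ (q (k + 1))) ↔
      ¬ Summable fun k =>
        Real.log (min (φ (q k)) ((q (k + 1) : ℝ) / (q k : ℝ))) / φ (q k)) := by
  have hq_mono : Monotone q := fun m n h => by
    exact_mod_cast (hq m).trans_le ((GenContFract.monotone_of_dens θ h).trans_eq (hq n).symm)
  have hq_pos (k : ℕ) : (0 : ℝ) < q k :=
    one_pos.trans_le ((GenContFract.one_le_of_dens θ k).trans_eq (hq k).symm)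
  have hG : Monotone fun k => φ (q k) := fun m n h => hφmono _ _ (hq_mono h)
  have hratio (k : ℕ) : 1 ≤ (q (k + 1) : ℝ) / q k :=
    (one_le_div (hq_pos k)).2 (by exact_mod_cast hq_mono k.le_succ)
  have hcompl := summable_compl_indicator_abs_log_div_self hG fun k => hφpos (q k)
  refine ⟨fun k _ => div_le_div_of_nonneg_right
      (log_le_log (lt_min (hφpos _) (one_pos.trans_le (hratio k))) (min_le_left _ _))
      (hφpos _).le,
    summable_indicator_of_abs_le hcompl fun k _ => (abs_div _ _).trans_le
      (by rw [abs_of_pos (hφpos _)]), ?_⟩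
  rw [not_iff_not]
  exact summable_div_succ_iff_summable_div hG (fun k => hφpos _) (fun k hk => hk.2)
    (summable_indicator_of_abs_le hcompl fun k _ => by
      rw [abs_div, abs_of_pos (hφpos _)]
      exact div_le_div_of_nonneg_right (abs_log_min_le_abs_log (hratio k)) (hφpos _).le)

theorem lambda_complement_summable_and_equivalence
    (θ : ℝ) (hθ : Irrational θ) (q : ℕ → ℕ)
    (hq : ∀ k, (q k : ℝ) = (GenContFract.of θ).dens k)
    (φ : ℕ → ℝ) (hφpos : ∀ n, 0 < φ n) (hφmono : ∀ m n, m ≤ n → φ m ≤ φ n)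
    (hφtop : Tendsto φ atTop atTop) :
    (∀ k : ℕ, k ∉ {k : ℕ | 1 ≤ k ∧ φ (q (k + 1)) ≤ 2 * φ (q k)} →
      Real.log (min (φ (q k)) ((q (k + 1) : ℝ) / (q k : ℝ))) / φ (q k) ≤
        Real.log (φ (q k)) / φ (q k)) ∧
    Summable (({k : ℕ | 1 ≤ k ∧ φ (q (k + 1)) ≤ 2 * φ (q k)}ᶜ).indicator
      (fun k => Real.log (φ (q k)) / φ (q k))) ∧
    ((¬ Summable fun k =>
        Real.log (min (φ (q k)) ((q (k + 1) : ℝ) / (q k : ℝ))) / φ (q (k + 1))) ↔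
      ¬ Summable fun k =>
        Real.log (min (φ (q k)) ((q (k + 1) : ℝ) / (q k : ℝ))) / φ (q k)) :=
  lambda_complement_summable_and_equivalence_general θ q hq φ hφpos hφmono
end
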